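/- Let R be a left-symmetric conformal algebra, Q a ℂ[∂]-module, and Ω(R,Q) = (φ, ψ, g_λ(·,·), ∘_λ) an extending datum in which l and r are trivial. Then Ω(R,Q) is a left-symmetric conformal extending structure of R by Q if and only if (Q, ∘_λ) is a left-symmetric conformal algebra and the following hold for all a, b ∈ R and x, y, z ∈ Q: (C1) (φ(x)_λ a − ψ(x)_{−μ−∂} a)_{λ+μ} b = φ(x)_λ(a_μ b) − a_μ(φ(x)_λ b); (C2) ψ(x)_{−λ−μ−∂}(a_λ b − b_μ a) = a_λ(ψ(x)_{−μ−∂} b) − b_μ(ψ(x)_{−λ−∂} a); (C3) ψ(y)_{−λ−μ−∂}(ψ(x)_{−λ−∂} a − φ(x)_μ a) − a_λ(g_μ(x,y)) − ψ(x∘_μ y)_{−λ−∂} a = −φ(x)_μ(ψ(y)_{−λ−∂} a); (C4) (g_λ(x,y) − g_μ(y,x))_{λ+μ} a + φ(x∘_λ y − y∘_μ x)_{λ+μ} a = φ(x)_λ(φ(y)_μ a) − φ(y)_μ(φ(x)_λ a); (C5) ψ(z)_{−λ−μ−∂} g_λ(x,y) + g_{λ+μ}(x∘_λ y, z) − φ(x)_λ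 g_μ(y,z) − g_λ(x, y∘_μ z) = ψ(z)_{−λ−μ−∂} g_μ(y,x) + g_{λ+μ}(y∘_μ x, z) − φ(y)_μ g_λ(x,z) − g_μ(y, x∘_λ z). -/
import Mathlib


open Finsupp Polynomial

noncomputable section

/-- One-variable conformal polynomials in λ with coefficients in `W`:
the coefficient of `λ^n` sits at index `n`. -/
abbrev OP (W : Type*) [Zero W] := ℕ →₀ W

/-- Two-variable conformal polynomials in λ, μ with coefficients in `W`. -/
abbrev TP (W : Type*) [Zero W] := (ℕ × ℕ) →₀ W

section Defs

variable {U V W L : Type*}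
variable [AddCommGroup U] [Module ℂ U] [AddCommGroup V] [Module ℂ V]
variable [AddCommGroup W] [Module ℂ W] [AddCommGroup L] [Module ℂ L]

/-- Multiplication by the variable λ on one-variable polynomials. -/
def lsh : OP W →ₗ[ℂ] OP W := Finsupp.lmapDomain W ℂ (· + 1)

/-- Multiplication by λ on two-variable polynomials. -/
def LX : TP W →ₗ[ℂ] TP W := Finsupp.lmapDomain W ℂ (fun p => (p.1 + 1, p.2))

/-- Multiplication by μ on two-variable polynomials. -/
def LY : TP W →ₗ[ℂ] TP W := Finsupp.lmapDomain W ℂ (fun p => (p.1, p.2 + 1))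

/-- Coefficientwise action of ∂ on one-variable polynomials. -/
def pD (dW : W →ₗ[ℂ] W) : OP W →ₗ[ℂ] OP W := Finsupp.mapRange.linearMap dW

/-- Coefficientwise action of ∂ on two-variable polynomials. -/
def PD (dW : W →ₗ[ℂ] W) : TP W →ₗ[ℂ] TP W := Finsupp.mapRange.linearMap dW

/-- The operator −λ−∂ on one-variable polynomials. -/
def nD (dW : W →ₗ[ℂ] W) : OP W →ₗ[ℂ] OP W := -lsh - pD dW

/-- The operator −λ−∂ on two-variable polynomials. -/
def nX (dW : W →ₗ[ℂ] W) : TP W →ₗ[ℂ] TP W := -LX - PD dW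

/-- The operator −μ−∂ on two-variable polynomials. -/
def nY (dW : W →ₗ[ℂ] W) : TP W →ₗ[ℂ] TP W := -LY - PD dW

/-- The operator −λ−μ−∂ on two-variable polynomials. -/
def nXY (dW : W →ₗ[ℂ] W) : TP W →ₗ[ℂ] TP W := -LX - LY - PD dW

/-- Substitution of a (commuting) operator `A` for the variable of a one-variable
polynomial, with values in two-variable polynomials. -/
def evA (A : TP W →ₗ[ℂ] TP W) : OP W →ₗ[ℂ] TP W :=
  Finsupp.lsum ℂ (fun k => (A ^ k) ∘ₗ Finsupp.lsingle ((0, 0) : ℕ × ℕ))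

/-- Substitution of an operator `A` for the variable of a one-variable polynomial. -/
def evA1 (A : OP W →ₗ[ℂ] OP W) : OP W →ₗ[ℂ] OP W :=
  Finsupp.lsum ℂ (fun k => (A ^ k) ∘ₗ Finsupp.lsingle (0 : ℕ))

/-- `u_A v`: the pairing `m` evaluated with the variable replaced by the operator `A`. -/
def ev2 (m : U →ₗ[ℂ] V →ₗ[ℂ] OP W) (A : TP W →ₗ[ℂ] TP W) (u : U) (v : V) : TP W :=
  evA A (m u v)

/-- Extension of the pairing `m`, in its first argument, to two-variable polynomials. -/
def exL (m : U →ₗ[ℂ] V →ₗ[ℂ] OP W) (A : TP W →ₗ[ℂ] TP W) (p : TP U) (v : V) : TP W :=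
  Finsupp.sum p fun ij u => (LX ^ ij.1) ((LY ^ ij.2) (evA A (m u v)))

/-- Extension of the pairing `m`, in its second argument, to two-variable polynomials. -/
def exR (m : U →ₗ[ℂ] V →ₗ[ℂ] OP W) (A : TP W →ₗ[ℂ] TP W) (u : U) (p : TP V) : TP W :=
  Finsupp.sum p fun ij v => (LX ^ ij.1) ((LY ^ ij.2) (evA A (m u v)))

/-- Extension of a unary conformal-linear map to two-variable polynomials. -/
def exU (D : U →ₗ[ℂ] OP W) (A : TP W →ₗ[ℂ] TP W) (p : TP U) : TP W :=
  Finsupp.sum p fun ij u => (LX ^ ij.1) ((LY ^ ij.2) (evA A (D u)))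

/-- Coefficientwise application of a linear map to a one-variable polynomial. -/
def pMap (f : U →ₗ[ℂ] W) : OP U →ₗ[ℂ] OP W := Finsupp.mapRange.linearMap f

/-- A conformal bilinear map: `f(∂u, v) = −λ f(u,v)` and `f(u, ∂v) = (λ+∂) f(u,v)`. -/
structure ConfBilin (dU : U →ₗ[ℂ] U) (dV : V →ₗ[ℂ] V) (dW : W →ₗ[ℂ] W)
    (m : U →ₗ[ℂ] V →ₗ[ℂ] OP W) : Prop where
  dleft : ∀ u v, m (dU u) v = -lsh (m u v)
  dright : ∀ u v, m u (dV v) = lsh (m u v) + pD dW (m u v)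

/-- A left-symmetric conformal algebra structure on the ℂ[∂]-module `(L, dL)`. -/
structure IsLSCA (dL : L →ₗ[ℂ] L) (m : L →ₗ[ℂ] L →ₗ[ℂ] OP L) : Prop where
  conf : ConfBilin dL dL dL m
  lsym : ∀ a b c : L,
    exL m (LX + LY) (ev2 m LX a b) c - exR m LX a (ev2 m LY b c)
      = exL m (LX + LY) (ev2 m LY b a) c - exR m LY b (ev2 m LX a c)

/-- The commutator λ-bracket `[u_λ v] = u_λ v − v_{−λ−∂} u`. -/
def commut (dL : L →ₗ[ℂ] L) (m : L →ₗ[ℂ] L →ₗ[ℂ] OP L) : L →ₗ[ℂ] L →ₗ[ℂ] OP L :=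
  m - (m.compr₂ (evA1 (nD dL))).flip

/-- A Lie conformal algebra structure on the ℂ[∂]-module `(L, dL)`. -/
structure IsLieCA (dL : L →ₗ[ℂ] L) (br : L →ₗ[ℂ] L →ₗ[ℂ] OP L) : Prop where
  dleft : ∀ u v, br (dL u) v = -lsh (br u v)
  dright : ∀ u v, br u (dL v) = lsh (br u v) + pD dL (br u v)
  skew : ∀ u v, br u v = -evA1 (nD dL) (br v u)
  jacobi : ∀ a b c : L,
    exR br LX a (ev2 br LY b c)
      = exL br (LX + LY) (ev2 br LX a b) c + exR br LY b (ev2 br LX a c)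

end Defs

section Ext

variable {R Q : Type*} [AddCommGroup R] [Module ℂ R] [AddCommGroup Q] [Module ℂ Q]

/-- An extending datum of a left-symmetric conformal algebra `R` by a ℂ[∂]-module `Q`. -/
structure ExtDatum (dR : R →ₗ[ℂ] R) (dQ : Q →ₗ[ℂ] Q) where
  phi : Q →ₗ[ℂ] R →ₗ[ℂ] OP R
  psi : Q →ₗ[ℂ] R →ₗ[ℂ] OP R
  l : R →ₗ[ℂ] Q →ₗ[ℂ] OP Q
  r : R →ₗ[ℂ] Q →ₗ[ℂ] OP Q
  g : Q →ₗ[ℂ] Q →ₗ[ℂ] OP R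
  o : Q →ₗ[ℂ] Q →ₗ[ℂ] OP Q
  hphi : ConfBilin dQ dR dR phi
  hpsi : ConfBilin dQ dR dR psi
  hl : ConfBilin dR dQ dQ l
  hr : ConfBilin dR dQ dQ r
  hg : ConfBilin dQ dQ dR g
  ho : ConfBilin dQ dQ dQ o

/-- Embedding of `R`-valued polynomials into `(R ⊕ Q)`-valued polynomials. -/
def inlP (R Q : Type*) [AddCommGroup R] [Module ℂ R] [AddCommGroup Q] [Module ℂ Q] :
    OP R →ₗ[ℂ] OP (R × Q) := Finsupp.mapRange.linearMap (LinearMap.inl ℂ R Q)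

/-- Embedding of `Q`-valued polynomials into `(R ⊕ Q)`-valued polynomials. -/
def inrP (R Q : Type*) [AddCommGroup R] [Module ℂ R] [AddCommGroup Q] [Module ℂ Q] :
    OP Q →ₗ[ℂ] OP (R × Q) := Finsupp.mapRange.linearMap (LinearMap.inr ℂ R Q)

/-- The λ-product of the unified product `R ♮ Q`:
`(a+x) _λ (b+y) = (a_λ b + φ(x)_λ b + ψ(y)_{−λ−∂} a + g_λ(x,y)) + (x∘_λ y + l(a)_λ y + r(b)_{−λ−∂} x)`. -/
def uprod (dR : R →ₗ[ℂ] R) (dQ : Q →ₗ[ℂ] Q) (Ω : ExtDatum dR dQ)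
    (m : R →ₗ[ℂ] R →ₗ[ℂ] OP R) :
    (R × Q) →ₗ[ℂ] (R × Q) →ₗ[ℂ] OP (R × Q) :=
  ((m.compl₁₂ (LinearMap.fst ℂ R Q) (LinearMap.fst ℂ R Q)).compr₂ (inlP R Q))
    + ((Ω.phi.compl₁₂ (LinearMap.snd ℂ R Q) (LinearMap.fst ℂ R Q)).compr₂ (inlP R Q))
    + (((Ω.psi.compl₁₂ (LinearMap.snd ℂ R Q) (LinearMap.fst ℂ R Q)).compr₂
        (inlP R Q ∘ₗ evA1 (nD dR))).flip)
    + ((Ω.g.compl₁₂ (LinearMap.snd ℂ R Q) (LinearMap.snd ℂ R Q)).compr₂ (inlP R Q))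
    + ((Ω.o.compl₁₂ (LinearMap.snd ℂ R Q) (LinearMap.snd ℂ R Q)).compr₂ (inrP R Q))
    + ((Ω.l.compl₁₂ (LinearMap.fst ℂ R Q) (LinearMap.snd ℂ R Q)).compr₂ (inrP R Q))
    + (((Ω.r.compl₁₂ (LinearMap.fst ℂ R Q) (LinearMap.snd ℂ R Q)).compr₂
        (inrP R Q ∘ₗ evA1 (nD dQ))).flip)

lemma uprod_apply (dR : R →ₗ[ℂ] R) (dQ : Q →ₗ[ℂ] Q) (Ω : ExtDatum dR dQ)
    (m : R →ₗ[ℂ] R →ₗ[ℂ] OP R) (e₁ e₂ : R × Q) :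
    uprod dR dQ Ω m e₁ e₂ =
      inlP R Q (m e₁.1 e₂.1 + Ω.phi e₁.2 e₂.1 + evA1 (nD dR) (Ω.psi e₂.2 e₁.1) + Ω.g e₁.2 e₂.2)
      + inrP R Q (Ω.o e₁.2 e₂.2 + Ω.l e₁.1 e₂.2 + evA1 (nD dQ) (Ω.r e₂.1 e₁.2)) := by
  simp [uprod, LinearMap.add_apply, LinearMap.compr₂_apply, LinearMap.compl₁₂_apply,
    LinearMap.flip_apply, map_add, LinearMap.comp_apply]
  abel

lemma uprod_res (dR : R →ₗ[ℂ] R) (dQ : Q →ₗ[ℂ] Q) (Ω : ExtDatum dR dQ)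
    (m : R →ₗ[ℂ] R →ₗ[ℂ] OP R) (a b : R) :
    uprod dR dQ Ω m (a, (0 : Q)) (b, 0) = inlP R Q (m a b) := by
  rw [uprod_apply]
  simp

/-- Isomorphism property of left-symmetric conformal algebra structures, via
a ℂ[∂]-module automorphism `T` of the underlying module `E`. -/
structure IsIsoLSCA {E : Type*} [AddCommGroup E] [Module ℂ E] (dE : E →ₗ[ℂ] E)
    (m₁ m₂ : E →ₗ[ℂ] E →ₗ[ℂ] OP E) (T : E ≃ₗ[ℂ] E) : Prop where
  dcomm : ∀ e, T (dE e) = dE (T e)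
  mult : ∀ u v, m₂ (T u) (T v) = pMap (T : E →ₗ[ℂ] E) (m₁ u v)

/-- `T` stabilizes `R`, i.e. `T ∘ i = i` for the inclusion `i : R → R ⊕ Q`. -/
def Stab (T : (R × Q) ≃ₗ[ℂ] (R × Q)) : Prop := ∀ a : R, T (a, 0) = (a, 0)

/-- `T` co-stabilizes `Q`, i.e. `π ∘ T = π` for the projection `π : R ⊕ Q → Q`. -/
def Costab (T : (R × Q) ≃ₗ[ℂ] (R × Q)) : Prop := ∀ e, (T e).2 = e.2

end Ext

/-! ### Auxiliary toolkit -/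

section Tool1

variable {U V W W' : Type*}
variable [AddCommGroup U] [Module ℂ U] [AddCommGroup V] [Module ℂ V]
variable [AddCommGroup W] [Module ℂ W] [AddCommGroup W'] [Module ℂ W']

lemma evA_apply' (A : TP W →ₗ[ℂ] TP W) (p : OP W) :
    evA A p = p.sum fun k w => (A ^ k) (Finsupp.single ((0, 0) : ℕ × ℕ) w) := by
  rw [evA, Finsupp.lsum_apply]; rfl

lemma evA1_apply' (B : OP W →ₗ[ℂ] OP W) (p : OP W) :
    evA1 B p = p.sum fun k w => (B ^ k) (Finsupp.single (0 : ℕ) w) := by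
  rw [evA1, Finsupp.lsum_apply]; rfl

lemma evA_single' (A : TP W →ₗ[ℂ] TP W) (k : ℕ) (w : W) :
    evA A (Finsupp.single k w) = (A ^ k) (Finsupp.single ((0, 0) : ℕ × ℕ) w) := by
  rw [evA_apply', Finsupp.sum_single_index (by simp)]

/-- `mapRange` of a linear map, on two-variable polynomials. -/
def TMap (f : U →ₗ[ℂ] W) : TP U →ₗ[ℂ] TP W := Finsupp.mapRange.linearMap f

lemma comp_pow {M N : Type*} [AddCommGroup M] [Module ℂ M] [AddCommGroup N] [Module ℂ N]
    (A' : N →ₗ[ℂ] N) (A : M →ₗ[ℂ] M) (J : M →ₗ[ℂ] N) (h : A' ∘ₗ J = J ∘ₗ A) (k : ℕ) :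
    (A' ^ k) ∘ₗ J = J ∘ₗ (A ^ k) := by
  induction k with
  | zero => simp [Module.End.one_eq_id]
  | succ n ih =>
    rw [pow_succ', pow_succ', Module.End.mul_eq_comp, Module.End.mul_eq_comp,
      LinearMap.comp_assoc, ih, ← LinearMap.comp_assoc, h, LinearMap.comp_assoc]

lemma comp_pow_apply {M N : Type*} [AddCommGroup M] [Module ℂ M] [AddCommGroup N] [Module ℂ N]
    (A' : N →ₗ[ℂ] N) (A : M →ₗ[ℂ] M) (J : M →ₗ[ℂ] N) (h : A' ∘ₗ J = J ∘ₗ A) (k : ℕ) (p : M) :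
    (A' ^ k) (J p) = J ((A ^ k) p) := by
  have := LinearMap.ext_iff.mp (comp_pow A' A J h k) p
  simpa using this

lemma evA_pMap (A' : TP W' →ₗ[ℂ] TP W') (A : TP W →ₗ[ℂ] TP W) (J : W →ₗ[ℂ] W')
    (h : A' ∘ₗ TMap J = TMap J ∘ₗ A) (p : OP W) :
    evA A' (pMap J p) = TMap J (evA A p) := by
  rw [evA_apply', evA_apply', pMap, Finsupp.mapRange.linearMap_apply,
    Finsupp.sum_mapRange_index (fun _ => by simp)]
  rw [map_finsuppSum]
  refine Finsupp.sum_congr fun k _ => ?_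
  have h1 : (Finsupp.single ((0, 0) : ℕ × ℕ) (J (p k))) = TMap J (Finsupp.single (0, 0) (p k)) := by
    simp [TMap, Finsupp.mapRange.linearMap_apply, Finsupp.mapRange_single]
  rw [h1, comp_pow_apply A' A (TMap J) h]

lemma TMap_comp (f : W →ₗ[ℂ] W') (g : U →ₗ[ℂ] W) (p : TP U) :
    TMap f (TMap g p) = TMap (f ∘ₗ g) p := by
  rw [TMap, TMap, TMap, Finsupp.mapRange.linearMap_comp]; rfl

lemma TMap_id (p : TP W) : TMap (LinearMap.id : W →ₗ[ℂ] W) p = p := by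
  rw [TMap, Finsupp.mapRange.linearMap_id]; rfl

lemma TMap_zero (p : TP U) : TMap (0 : U →ₗ[ℂ] W) p = 0 := by
  ext a; simp [TMap, Finsupp.mapRange.linearMap_apply]

lemma lmap_TMap (f : (ℕ × ℕ) → (ℕ × ℕ)) (J : U →ₗ[ℂ] W) :
    (Finsupp.lmapDomain W ℂ f) ∘ₗ TMap J = TMap J ∘ₗ (Finsupp.lmapDomain U ℂ f) := by
  apply LinearMap.ext; intro p
  simp only [LinearMap.comp_apply, TMap, Finsupp.lmapDomain_apply,
    Finsupp.mapRange.linearMap_apply]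
  rw [Finsupp.mapDomain_mapRange _ _ _ _ (map_add J)]

lemma LX_TMap (J : U →ₗ[ℂ] W) : LX ∘ₗ TMap J = TMap J ∘ₗ LX := by
  simp only [LX]; exact lmap_TMap _ J

lemma LY_TMap (J : U →ₗ[ℂ] W) : LY ∘ₗ TMap J = TMap J ∘ₗ LY := by
  simp only [LY]; exact lmap_TMap _ J

lemma LXY_TMap (J : U →ₗ[ℂ] W) : (LX + LY) ∘ₗ TMap J = TMap J ∘ₗ (LX + LY) := by
  rw [LinearMap.add_comp, LinearMap.comp_add, LX_TMap, LY_TMap]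

lemma PD_TMap (dU : U →ₗ[ℂ] U) (dW : W →ₗ[ℂ] W) (J : U →ₗ[ℂ] W) (h : dW ∘ₗ J = J ∘ₗ dU) :
    PD dW ∘ₗ TMap J = TMap J ∘ₗ PD dU := by
  rw [PD, PD]
  show Finsupp.mapRange.linearMap dW ∘ₗ Finsupp.mapRange.linearMap J
    = Finsupp.mapRange.linearMap J ∘ₗ Finsupp.mapRange.linearMap dU
  rw [← Finsupp.mapRange.linearMap_comp, ← Finsupp.mapRange.linearMap_comp, h]

lemma LX_PD (d : W →ₗ[ℂ] W) : LX ∘ₗ PD d = PD d ∘ₗ LX := by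
  have := LX_TMap (W := W) d
  rw [show TMap d = PD d from rfl] at this
  exact this

lemma LY_PD (d : W →ₗ[ℂ] W) : LY ∘ₗ PD d = PD d ∘ₗ LY := by
  have := LY_TMap (W := W) d
  rw [show TMap d = PD d from rfl] at this
  exact this

lemma LXY_PD (d : W →ₗ[ℂ] W) : (LX + LY) ∘ₗ PD d = PD d ∘ₗ (LX + LY) := by
  rw [LinearMap.add_comp, LinearMap.comp_add, LX_PD, LY_PD]

lemma evA_lsh (A : TP W →ₗ[ℂ] TP W) (p : OP W) : evA A (lsh p) = A (evA A p) := by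
  rw [evA_apply', evA_apply', lsh, Finsupp.lmapDomain_apply,
    Finsupp.sum_mapDomain_index_inj (add_left_injective 1), map_finsuppSum]
  refine Finsupp.sum_congr fun k _ => ?_
  rw [pow_succ', Module.End.mul_apply]

lemma evA_pD (A : TP W →ₗ[ℂ] TP W) (d : W →ₗ[ℂ] W) (h : A ∘ₗ PD d = PD d ∘ₗ A) (p : OP W) :
    evA A (pD d p) = PD d (evA A p) := by
  rw [evA_apply', evA_apply', pD, Finsupp.mapRange.linearMap_apply,
    Finsupp.sum_mapRange_index (fun _ => by simp), map_finsuppSum]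
  refine Finsupp.sum_congr fun k _ => ?_
  have h1 : Finsupp.single ((0, 0) : ℕ × ℕ) (d (p k))
      = PD d (Finsupp.single ((0, 0) : ℕ × ℕ) (p k)) := by
    simp [PD, Finsupp.mapRange.linearMap_apply]
  rw [h1, comp_pow_apply A A (PD d) h]

lemma evA_nD (A : TP W →ₗ[ℂ] TP W) (d : W →ₗ[ℂ] W) (h : A ∘ₗ PD d = PD d ∘ₗ A) (p : OP W) :
    evA A (nD d p) = (-A - PD d) (evA A p) := by
  have : nD d p = -(lsh p) - pD d p := by simp [nD, LinearMap.sub_apply]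
  rw [this, map_sub, map_neg, evA_lsh, evA_pD A d h]
  simp [LinearMap.sub_apply]

lemma evA_nD_pow (A : TP W →ₗ[ℂ] TP W) (d : W →ₗ[ℂ] W) (h : A ∘ₗ PD d = PD d ∘ₗ A) (k : ℕ)
    (p : OP W) : evA A ((nD d ^ k) p) = ((-A - PD d) ^ k) (evA A p) := by
  induction k generalizing p with
  | zero => simp
  | succ n ih =>
    rw [pow_succ', pow_succ', Module.End.mul_apply, Module.End.mul_apply, evA_nD A d h, ih]

lemma evA_evA1 (A : TP W →ₗ[ℂ] TP W) (d : W →ₗ[ℂ] W) (h : A ∘ₗ PD d = PD d ∘ₗ A) (q : OP W) :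
    evA A (evA1 (nD d) q) = evA (-A - PD d) q := by
  rw [evA1_apply', map_finsuppSum, evA_apply' (-A - PD d)]
  refine Finsupp.sum_congr fun k _ => ?_
  rw [evA_nD_pow A d h, evA_single', pow_zero, Module.End.one_apply]

lemma evA1_lsh (B : OP W →ₗ[ℂ] OP W) (p : OP W) : evA1 B (lsh p) = B (evA1 B p) := by
  rw [evA1_apply', evA1_apply', lsh, Finsupp.lmapDomain_apply,
    Finsupp.sum_mapDomain_index_inj (add_left_injective 1), map_finsuppSum]
  refine Finsupp.sum_congr fun k _ => ?_
  rw [pow_succ', Module.End.mul_apply]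

lemma evA1_pD (B : OP W →ₗ[ℂ] OP W) (d : W →ₗ[ℂ] W) (h : B ∘ₗ pD d = pD d ∘ₗ B) (p : OP W) :
    evA1 B (pD d p) = pD d (evA1 B p) := by
  rw [evA1_apply', evA1_apply', pD, Finsupp.mapRange.linearMap_apply,
    Finsupp.sum_mapRange_index (fun _ => by simp), map_finsuppSum]
  refine Finsupp.sum_congr fun k _ => ?_
  have h1 : Finsupp.single (0 : ℕ) (d (p k)) = pD d (Finsupp.single (0 : ℕ) (p k)) := by
    simp [pD, Finsupp.mapRange.linearMap_apply]
  rw [h1, comp_pow_apply B B (pD d) h]; rfl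

lemma lsh_pD (d : W →ₗ[ℂ] W) : lsh ∘ₗ pD d = pD d ∘ₗ lsh := by
  apply LinearMap.ext; intro p
  simp only [LinearMap.comp_apply, lsh, pD, Finsupp.lmapDomain_apply,
    Finsupp.mapRange.linearMap_apply]
  rw [Finsupp.mapDomain_mapRange _ _ _ _ (map_add d)]

lemma nD_pD (d : W →ₗ[ℂ] W) : nD d ∘ₗ pD d = pD d ∘ₗ nD d := by
  rw [nD, LinearMap.sub_comp, LinearMap.comp_sub, LinearMap.neg_comp, LinearMap.comp_neg,
    lsh_pD]

/-! Linearity lemmas for `exL`, `exR`, `ev2`. -/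

lemma ev2_zero_l (m : U →ₗ[ℂ] V →ₗ[ℂ] OP W) (A : TP W →ₗ[ℂ] TP W) (v : V) :
    ev2 m A 0 v = 0 := by simp [ev2]

lemma ev2_zero_r (m : U →ₗ[ℂ] V →ₗ[ℂ] OP W) (A : TP W →ₗ[ℂ] TP W) (u : U) :
    ev2 m A u 0 = 0 := by simp [ev2]

lemma exL_add_p (m : U →ₗ[ℂ] V →ₗ[ℂ] OP W) (A : TP W →ₗ[ℂ] TP W) (p p' : TP U) (v : V) :
    exL m A (p + p') v = exL m A p v + exL m A p' v :=
  Finsupp.sum_add_index' (fun ij => by simp) (fun ij u u' => by simp)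

lemma exL_sub_p (m : U →ₗ[ℂ] V →ₗ[ℂ] OP W) (A : TP W →ₗ[ℂ] TP W) (p p' : TP U) (v : V) :
    exL m A (p - p') v = exL m A p v - exL m A p' v :=
  Finsupp.sum_sub_index (fun ij u u' => by simp)

lemma exL_zero_p (m : U →ₗ[ℂ] V →ₗ[ℂ] OP W) (A : TP W →ₗ[ℂ] TP W) (v : V) :
    exL m A 0 v = 0 := Finsupp.sum_zero_index

lemma exL_zero_v (m : U →ₗ[ℂ] V →ₗ[ℂ] OP W) (A : TP W →ₗ[ℂ] TP W) (p : TP U) :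
    exL m A p 0 = 0 := by simp [exL]

lemma exL_add_v (m : U →ₗ[ℂ] V →ₗ[ℂ] OP W) (A : TP W →ₗ[ℂ] TP W) (p : TP U) (v v' : V) :
    exL m A p (v + v') = exL m A p v + exL m A p v' := by
  simp [exL, Finsupp.sum_add]

lemma exR_add_p (m : U →ₗ[ℂ] V →ₗ[ℂ] OP W) (A : TP W →ₗ[ℂ] TP W) (u : U) (p p' : TP V) :
    exR m A u (p + p') = exR m A u p + exR m A u p' :=
  Finsupp.sum_add_index' (fun ij => by simp) (fun ij v v' => by simp)

lemma exR_sub_p (m : U →ₗ[ℂ] V →ₗ[ℂ] OP W) (A : TP W →ₗ[ℂ] TP W) (u : U) (p p' : TP V) :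
    exR m A u (p - p') = exR m A u p - exR m A u p' :=
  Finsupp.sum_sub_index (fun ij v v' => by simp)

lemma exR_zero_p (m : U →ₗ[ℂ] V →ₗ[ℂ] OP W) (A : TP W →ₗ[ℂ] TP W) (u : U) :
    exR m A u 0 = 0 := Finsupp.sum_zero_index

lemma exR_zero_u (m : U →ₗ[ℂ] V →ₗ[ℂ] OP W) (A : TP W →ₗ[ℂ] TP W) (p : TP V) :
    exR m A 0 p = 0 := by simp [exR]

lemma exR_add_u (m : U →ₗ[ℂ] V →ₗ[ℂ] OP W) (A : TP W →ₗ[ℂ] TP W) (u u' : U) (p : TP V) :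
    exR m A (u + u') p = exR m A u p + exR m A u' p := by
  simp [exR, Finsupp.sum_add]

/-! `pMap` commutation lemmas. -/

lemma pMap_comp (f : W →ₗ[ℂ] W') (g : U →ₗ[ℂ] W) (p : OP U) :
    pMap f (pMap g p) = pMap (f ∘ₗ g) p := by
  rw [pMap, pMap, pMap, Finsupp.mapRange.linearMap_comp]; rfl

lemma lsh_pMap (J : U →ₗ[ℂ] W) (p : OP U) : lsh (pMap J p) = pMap J (lsh p) := by
  simp only [lsh, pMap, Finsupp.lmapDomain_apply, Finsupp.mapRange.linearMap_apply]
  rw [Finsupp.mapDomain_mapRange _ _ _ _ (map_add J)]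

lemma pD_pMap (dU : U →ₗ[ℂ] U) (dW : W →ₗ[ℂ] W) (J : U →ₗ[ℂ] W) (h : dW ∘ₗ J = J ∘ₗ dU)
    (p : OP U) : pD dW (pMap J p) = pMap J (pD dU p) := by
  rw [show pD dW = pMap dW from rfl, show pD dU = pMap dU from rfl, pMap_comp, pMap_comp, h]

/-! Swap of the two variables. -/

/-- Exchange of the variables λ and μ on two-variable polynomials. -/
def sw : TP W →ₗ[ℂ] TP W := Finsupp.lmapDomain W ℂ Prod.swap

lemma sw_sw (p : TP W) : sw (sw p) = p := by
  simp only [sw, Finsupp.lmapDomain_apply, ← Finsupp.mapDomain_comp]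
  rw [show (Prod.swap ∘ Prod.swap : ℕ × ℕ → ℕ × ℕ) = id from funext fun x => Prod.swap_swap x,
    Finsupp.mapDomain_id]

lemma sw_inj {p q : TP W} (h : sw p = sw q) : p = q := by
  rw [← sw_sw p, h, sw_sw]

lemma sw_comm_gen (f g : ℕ × ℕ → ℕ × ℕ) (h : Prod.swap ∘ f = g ∘ Prod.swap) :
    (sw : TP W →ₗ[ℂ] TP W) ∘ₗ Finsupp.lmapDomain W ℂ f
      = Finsupp.lmapDomain W ℂ g ∘ₗ sw := by
  apply LinearMap.ext; intro p
  simp only [LinearMap.comp_apply, sw, Finsupp.lmapDomain_apply, ← Finsupp.mapDomain_comp, h]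

lemma sw_LX : (sw : TP W →ₗ[ℂ] TP W) ∘ₗ LX = LY ∘ₗ sw := by
  simp only [LX, LY]; exact sw_comm_gen _ _ rfl

lemma sw_LY : (sw : TP W →ₗ[ℂ] TP W) ∘ₗ LY = LX ∘ₗ sw := by
  simp only [LX, LY]; exact sw_comm_gen _ _ rfl

lemma sw_LXY : (sw : TP W →ₗ[ℂ] TP W) ∘ₗ (LX + LY) = (LX + LY) ∘ₗ sw := by
  rw [LinearMap.comp_add, LinearMap.add_comp, sw_LX, sw_LY]; abel

lemma sw_PD (d : W →ₗ[ℂ] W) : (sw : TP W →ₗ[ℂ] TP W) ∘ₗ PD d = PD d ∘ₗ sw := by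
  have := lmap_TMap (W := W) Prod.swap d
  rw [show TMap d = PD d from rfl] at this
  exact this

lemma sw_nX (d : W →ₗ[ℂ] W) : (sw : TP W →ₗ[ℂ] TP W) ∘ₗ nX d = nY d ∘ₗ sw := by
  rw [nX, nY, LinearMap.comp_sub, LinearMap.sub_comp, LinearMap.comp_neg, LinearMap.neg_comp,
    sw_LX, sw_PD]

lemma sw_nY (d : W →ₗ[ℂ] W) : (sw : TP W →ₗ[ℂ] TP W) ∘ₗ nY d = nX d ∘ₗ sw := by
  rw [nX, nY, LinearMap.comp_sub, LinearMap.sub_comp, LinearMap.comp_neg, LinearMap.neg_comp,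
    sw_LY, sw_PD]

lemma sw_nXY (d : W →ₗ[ℂ] W) : (sw : TP W →ₗ[ℂ] TP W) ∘ₗ nXY d = nXY d ∘ₗ sw := by
  rw [nXY, LinearMap.comp_sub, LinearMap.sub_comp, LinearMap.comp_sub, LinearMap.sub_comp,
    LinearMap.comp_neg, LinearMap.neg_comp, sw_LX, sw_LY, sw_PD]
  abel

lemma sw_single00 (w : W) :
    sw (Finsupp.single ((0, 0) : ℕ × ℕ) w) = Finsupp.single ((0, 0) : ℕ × ℕ) w := by
  simp [sw, Finsupp.lmapDomain_apply, Finsupp.mapDomain_single]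

lemma sw_evA (A A' : TP W →ₗ[ℂ] TP W) (h : (sw : TP W →ₗ[ℂ] TP W) ∘ₗ A = A' ∘ₗ sw)
    (p : OP W) : sw (evA A p) = evA A' p := by
  rw [evA_apply', evA_apply', map_finsuppSum]
  refine Finsupp.sum_congr fun k _ => ?_
  rw [← sw_single00 (p k), comp_pow_apply A' A sw h.symm, sw_single00]

lemma LX_LY_comm : (LX : TP W →ₗ[ℂ] TP W) ∘ₗ LY = LY ∘ₗ LX := by
  apply LinearMap.ext; intro p
  simp only [LinearMap.comp_apply, LX, LY, Finsupp.lmapDomain_apply, ← Finsupp.mapDomain_comp]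
  rfl

lemma pow_pow_comm' {M : Type*} [AddCommGroup M] [Module ℂ M] (A B : M →ₗ[ℂ] M)
    (h : A ∘ₗ B = B ∘ₗ A) (i j : ℕ) (t : M) : (A ^ i) ((B ^ j) t) = (B ^ j) ((A ^ i) t) := by
  have hc : Commute A B := by
    rw [Commute, SemiconjBy, Module.End.mul_eq_comp, Module.End.mul_eq_comp, h]
  have := (hc.pow_pow i j)
  calc (A ^ i) ((B ^ j) t) = ((A ^ i) * (B ^ j)) t := rfl
    _ = ((B ^ j) * (A ^ i)) t := by rw [this]
    _ = (B ^ j) ((A ^ i) t) := rfl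

lemma sw_exL (m : U →ₗ[ℂ] V →ₗ[ℂ] OP W) (A A' : TP W →ₗ[ℂ] TP W)
    (h : (sw : TP W →ₗ[ℂ] TP W) ∘ₗ A = A' ∘ₗ sw) (p : TP U) (v : V) :
    sw (exL m A p v) = exL m A' (sw p) v := by
  rw [exL, exL, show (sw : TP U →ₗ[ℂ] TP U) p = Finsupp.mapDomain Prod.swap p from rfl,
    Finsupp.sum_mapDomain_index_inj Prod.swap_injective, map_finsuppSum]
  refine Finsupp.sum_congr fun ij _ => ?_
  rw [← comp_pow_apply LY LX sw sw_LX.symm, ← comp_pow_apply LX LY sw sw_LY.symm,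
    sw_evA A A' h, pow_pow_comm' LY LX LX_LY_comm.symm, Prod.fst_swap, Prod.snd_swap]

lemma sw_exR (m : U →ₗ[ℂ] V →ₗ[ℂ] OP W) (A A' : TP W →ₗ[ℂ] TP W)
    (h : (sw : TP W →ₗ[ℂ] TP W) ∘ₗ A = A' ∘ₗ sw) (u : U) (p : TP V) :
    sw (exR m A u p) = exR m A' u (sw p) := by
  rw [exR, exR, show (sw : TP V →ₗ[ℂ] TP V) p = Finsupp.mapDomain Prod.swap p from rfl,
    Finsupp.sum_mapDomain_index_inj Prod.swap_injective, map_finsuppSum]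
  refine Finsupp.sum_congr fun ij _ => ?_
  rw [← comp_pow_apply LY LX sw sw_LX.symm, ← comp_pow_apply LX LY sw sw_LY.symm,
    sw_evA A A' h, pow_pow_comm' LY LX LX_LY_comm.symm, Prod.fst_swap, Prod.snd_swap]

lemma sw_ev2 (m : U →ₗ[ℂ] V →ₗ[ℂ] OP W) (A A' : TP W →ₗ[ℂ] TP W)
    (h : (sw : TP W →ₗ[ℂ] TP W) ∘ₗ A = A' ∘ₗ sw) (u : U) (v : V) :
    sw (ev2 m A u v) = ev2 m A' u v := sw_evA A A' h _

end Tool1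

section Master

variable {R Q : Type*} [AddCommGroup R] [Module ℂ R] [AddCommGroup Q] [Module ℂ Q]

lemma nX_def (dR : R →ₗ[ℂ] R) : (-LX - PD dR : TP R →ₗ[ℂ] TP R) = nX dR := rfl

lemma nY_def (dR : R →ₗ[ℂ] R) : (-LY - PD dR : TP R →ₗ[ℂ] TP R) = nY dR := rfl

lemma nXY_def (dR : R →ₗ[ℂ] R) : (-(LX + LY) - PD dR : TP R →ₗ[ℂ] TP R) = nXY dR := by
  rw [show nXY dR = -LX - LY - PD dR from rfl]; abel

lemma TMap_split {p p' : TP R} {q q' : TP Q} :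
    TMap (LinearMap.inl ℂ R Q) p + TMap (LinearMap.inr ℂ R Q) q
      = TMap (LinearMap.inl ℂ R Q) p' + TMap (LinearMap.inr ℂ R Q) q' ↔ p = p' ∧ q = q' := by
  constructor
  · intro h
    have hf := congrArg (TMap (LinearMap.fst ℂ R Q)) h
    have hs := congrArg (TMap (LinearMap.snd ℂ R Q)) h
    simp only [map_add, TMap_comp, LinearMap.fst_comp_inl, LinearMap.fst_comp_inr,
      LinearMap.snd_comp_inl, LinearMap.snd_comp_inr, TMap_id, TMap_zero,
      add_zero, zero_add] at hf hs
    exact ⟨hf, hs⟩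
  · rintro ⟨rfl, rfl⟩; rfl

variable (dR : R →ₗ[ℂ] R) (dQ : Q →ₗ[ℂ] Q)

lemma uprod_val (Ω : ExtDatum dR dQ) (hl : Ω.l = 0) (hr : Ω.r = 0)
    (m : R →ₗ[ℂ] R →ₗ[ℂ] OP R) (a b : R) (x y : Q) :
    uprod dR dQ Ω m (a, x) (b, y)
      = inlP R Q (m a b + Ω.phi x b + evA1 (nD dR) (Ω.psi y a) + Ω.g x y)
        + inrP R Q (Ω.o x y) := by
  rw [uprod_apply]; simp [hl, hr]

variable (Ω : ExtDatum dR dQ) (hl : Ω.l = 0) (hr : Ω.r = 0)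
    (m : R →ₗ[ℂ] R →ₗ[ℂ] OP R)
    (A' : TP (R × Q) →ₗ[ℂ] TP (R × Q)) (A : TP R →ₗ[ℂ] TP R) (AQ : TP Q →ₗ[ℂ] TP Q)
    (h1 : A' ∘ₗ TMap (LinearMap.inl ℂ R Q) = TMap (LinearMap.inl ℂ R Q) ∘ₗ A)
    (h2 : A' ∘ₗ TMap (LinearMap.inr ℂ R Q) = TMap (LinearMap.inr ℂ R Q) ∘ₗ AQ)
    (h3 : A ∘ₗ PD dR = PD dR ∘ₗ A)

include hl hr h1 h2 h3 in
lemma ev2_uprod_gen (a b : R) (x y : Q) :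
    ev2 (uprod dR dQ Ω m) A' (a, x) (b, y)
      = TMap (LinearMap.inl ℂ R Q)
          (ev2 m A a b + ev2 Ω.phi A x b + ev2 Ω.psi (-A - PD dR) y a + ev2 Ω.g A x y)
        + TMap (LinearMap.inr ℂ R Q) (ev2 Ω.o AQ x y) := by
  rw [ev2, uprod_val dR dQ Ω hl hr m, map_add,
    show inlP R Q = pMap (LinearMap.inl ℂ R Q) from rfl,
    show inrP R Q = pMap (LinearMap.inr ℂ R Q) from rfl,
    evA_pMap A' A _ h1, evA_pMap A' AQ _ h2]
  simp only [map_add, evA_evA1 A dR h3, ev2]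

include hl hr h1 h2 h3 in
lemma exL_uprod_gen (p : TP R) (q : TP Q) (c : R) (z : Q) :
    exL (uprod dR dQ Ω m) A'
        (TMap (LinearMap.inl ℂ R Q) p + TMap (LinearMap.inr ℂ R Q) q) (c, z)
      = TMap (LinearMap.inl ℂ R Q)
          (exL m A p c + exR Ω.psi (-A - PD dR) z p + exL Ω.phi A q c + exL Ω.g A q z)
        + TMap (LinearMap.inr ℂ R Q) (exL Ω.o AQ q z) := by
  rw [exL_add_p]
  have hp : exL (uprod dR dQ Ω m) A' (TMap (LinearMap.inl ℂ R Q) p) (c, z)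
      = TMap (LinearMap.inl ℂ R Q) (exL m A p c + exR Ω.psi (-A - PD dR) z p) := by
    rw [exL, TMap, Finsupp.mapRange.linearMap_apply,
      Finsupp.sum_mapRange_index (fun ij => by simp)]
    trans (Finsupp.sum p fun ij u => TMap (LinearMap.inl ℂ R Q)
      ((LX ^ ij.1) ((LY ^ ij.2) (evA A (m u c)))
        + (LX ^ ij.1) ((LY ^ ij.2) (evA (-A - PD dR) (Ω.psi z u)))))
    · refine Finsupp.sum_congr fun ij _ => ?_
      rw [LinearMap.inl_apply, uprod_val dR dQ Ω hl hr m]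
      simp only [map_zero, LinearMap.zero_apply, add_zero, zero_add]
      rw [show inlP R Q = pMap (LinearMap.inl ℂ R Q) from rfl, evA_pMap A' A _ h1,
        comp_pow_apply LY LY _ (LY_TMap _), comp_pow_apply LX LX _ (LX_TMap _)]
      simp only [map_add, evA_evA1 A dR h3]
    · rw [← map_finsuppSum, Finsupp.sum_add]
      rfl
  have hq : exL (uprod dR dQ Ω m) A' (TMap (LinearMap.inr ℂ R Q) q) (c, z)
      = TMap (LinearMap.inl ℂ R Q) (exL Ω.phi A q c + exL Ω.g A q z)
        + TMap (LinearMap.inr ℂ R Q) (exL Ω.o AQ q z) := by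
    rw [exL, TMap, Finsupp.mapRange.linearMap_apply,
      Finsupp.sum_mapRange_index (fun ij => by simp)]
    trans (Finsupp.sum q fun ij u => TMap (LinearMap.inl ℂ R Q)
      ((LX ^ ij.1) ((LY ^ ij.2) (evA A (Ω.phi u c)))
        + (LX ^ ij.1) ((LY ^ ij.2) (evA A (Ω.g u z))))
      + TMap (LinearMap.inr ℂ R Q) ((LX ^ ij.1) ((LY ^ ij.2) (evA AQ (Ω.o u z)))))
    · refine Finsupp.sum_congr fun ij _ => ?_
      rw [LinearMap.inr_apply, uprod_val dR dQ Ω hl hr m]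
      simp only [map_zero, LinearMap.zero_apply, add_zero, zero_add]
      rw [show inlP R Q = pMap (LinearMap.inl ℂ R Q) from rfl,
        show inrP R Q = pMap (LinearMap.inr ℂ R Q) from rfl, map_add (evA A'),
        evA_pMap A' A _ h1, evA_pMap A' AQ _ h2]
      simp only [map_add, comp_pow_apply LY LY _ (LY_TMap _),
        comp_pow_apply LX LX _ (LX_TMap _)]
    · rw [Finsupp.sum_add, ← map_finsuppSum, ← map_finsuppSum, Finsupp.sum_add]
      rfl
  rw [hp, hq]
  simp only [map_add]
  abel

include hl hr h1 h2 h3 in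
lemma exR_uprod_gen (a : R) (x : Q) (p : TP R) (q : TP Q) :
    exR (uprod dR dQ Ω m) A' (a, x)
        (TMap (LinearMap.inl ℂ R Q) p + TMap (LinearMap.inr ℂ R Q) q)
      = TMap (LinearMap.inl ℂ R Q)
          (exR m A a p + exR Ω.phi A x p + exL Ω.psi (-A - PD dR) q a + exR Ω.g A x q)
        + TMap (LinearMap.inr ℂ R Q) (exR Ω.o AQ x q) := by
  rw [exR_add_p]
  have hp : exR (uprod dR dQ Ω m) A' (a, x) (TMap (LinearMap.inl ℂ R Q) p)
      = TMap (LinearMap.inl ℂ R Q) (exR m A a p + exR Ω.phi A x p) := by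
    rw [exR, TMap, Finsupp.mapRange.linearMap_apply,
      Finsupp.sum_mapRange_index (fun ij => by simp)]
    trans (Finsupp.sum p fun ij v => TMap (LinearMap.inl ℂ R Q)
      ((LX ^ ij.1) ((LY ^ ij.2) (evA A (m a v)))
        + (LX ^ ij.1) ((LY ^ ij.2) (evA A (Ω.phi x v)))))
    · refine Finsupp.sum_congr fun ij _ => ?_
      rw [LinearMap.inl_apply, uprod_val dR dQ Ω hl hr m]
      simp only [map_zero, LinearMap.zero_apply, add_zero, zero_add]
      rw [show inlP R Q = pMap (LinearMap.inl ℂ R Q) from rfl, evA_pMap A' A _ h1,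
        comp_pow_apply LY LY _ (LY_TMap _), comp_pow_apply LX LX _ (LX_TMap _)]
      simp only [map_add]
    · rw [← map_finsuppSum, Finsupp.sum_add]
      rfl
  have hq : exR (uprod dR dQ Ω m) A' (a, x) (TMap (LinearMap.inr ℂ R Q) q)
      = TMap (LinearMap.inl ℂ R Q) (exL Ω.psi (-A - PD dR) q a + exR Ω.g A x q)
        + TMap (LinearMap.inr ℂ R Q) (exR Ω.o AQ x q) := by
    rw [exR, TMap, Finsupp.mapRange.linearMap_apply,
      Finsupp.sum_mapRange_index (fun ij => by simp)]
    trans (Finsupp.sum q fun ij w => TMap (LinearMap.inl ℂ R Q)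
      ((LX ^ ij.1) ((LY ^ ij.2) (evA (-A - PD dR) (Ω.psi w a)))
        + (LX ^ ij.1) ((LY ^ ij.2) (evA A (Ω.g x w))))
      + TMap (LinearMap.inr ℂ R Q) ((LX ^ ij.1) ((LY ^ ij.2) (evA AQ (Ω.o x w)))))
    · refine Finsupp.sum_congr fun ij _ => ?_
      rw [LinearMap.inr_apply, uprod_val dR dQ Ω hl hr m]
      simp only [map_zero, LinearMap.zero_apply, add_zero, zero_add]
      rw [show inlP R Q = pMap (LinearMap.inl ℂ R Q) from rfl,
        show inrP R Q = pMap (LinearMap.inr ℂ R Q) from rfl, map_add (evA A'),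
        evA_pMap A' A _ h1, evA_pMap A' AQ _ h2]
      simp only [map_add, evA_evA1 A dR h3, comp_pow_apply LY LY _ (LY_TMap _),
        comp_pow_apply LX LX _ (LX_TMap _)]
    · rw [Finsupp.sum_add, ← map_finsuppSum, ← map_finsuppSum, Finsupp.sum_add]
      rfl
  rw [hp, hq]
  simp only [map_add]
  abel

end Master

section Assemble

variable {R Q : Type*} [AddCommGroup R] [Module ℂ R] [AddCommGroup Q] [Module ℂ Q]
variable (dR : R →ₗ[ℂ] R) (dQ : Q →ₗ[ℂ] Q)
variable (Ω : ExtDatum dR dQ) (m : R →ₗ[ℂ] R →ₗ[ℂ] OP R)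

/-- The `R`-component of `ev2` of the unified product, with `λ`-substitution. -/
def PPx (a b : R) (x y : Q) : TP R :=
  ev2 m LX a b + ev2 Ω.phi LX x b + ev2 Ω.psi (nX dR) y a + ev2 Ω.g LX x y

/-- The `R`-component of `ev2` of the unified product, with `μ`-substitution. -/
def PPy (a b : R) (x y : Q) : TP R :=
  ev2 m LY a b + ev2 Ω.phi LY x b + ev2 Ω.psi (nY dR) y a + ev2 Ω.g LY x y

/-- The `R`-component of the outer `exL` of the unified product. -/
def TTL (p : TP R) (q : TP Q) (c : R) (z : Q) : TP R :=
  exL m (LX + LY) p c + exR Ω.psi (nXY dR) z p + exL Ω.phi (LX + LY) q c + exL Ω.g (LX + LY) q z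

/-- The `R`-component of the outer `exR` of the unified product (`λ`-version). -/
def TTRx (a : R) (x : Q) (p : TP R) (q : TP Q) : TP R :=
  exR m LX a p + exR Ω.phi LX x p + exL Ω.psi (nX dR) q a + exR Ω.g LX x q

/-- The `R`-component of the outer `exR` of the unified product (`μ`-version). -/
def TTRy (a : R) (x : Q) (p : TP R) (q : TP Q) : TP R :=
  exR m LY a p + exR Ω.phi LY x p + exL Ω.psi (nY dR) q a + exR Ω.g LY x q

variable (hl : Ω.l = 0) (hr : Ω.r = 0)

include hl hr in
lemma ev2_uprodX (a b : R) (x y : Q) :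
    ev2 (uprod dR dQ Ω m) LX (a, x) (b, y)
      = TMap (LinearMap.inl ℂ R Q) (PPx dR dQ Ω m a b x y)
        + TMap (LinearMap.inr ℂ R Q) (ev2 Ω.o LX x y) := by
  rw [PPx, ← nX_def dR]
  exact ev2_uprod_gen dR dQ Ω hl hr m LX LX LX (LX_TMap _) (LX_TMap _) (LX_PD dR) a b x y

include hl hr in
lemma ev2_uprodY (a b : R) (x y : Q) :
    ev2 (uprod dR dQ Ω m) LY (a, x) (b, y)
      = TMap (LinearMap.inl ℂ R Q) (PPy dR dQ Ω m a b x y)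
        + TMap (LinearMap.inr ℂ R Q) (ev2 Ω.o LY x y) := by
  rw [PPy, ← nY_def dR]
  exact ev2_uprod_gen dR dQ Ω hl hr m LY LY LY (LY_TMap _) (LY_TMap _) (LY_PD dR) a b x y

include hl hr in
lemma exL_uprodXY (p : TP R) (q : TP Q) (c : R) (z : Q) :
    exL (uprod dR dQ Ω m) (LX + LY)
        (TMap (LinearMap.inl ℂ R Q) p + TMap (LinearMap.inr ℂ R Q) q) (c, z)
      = TMap (LinearMap.inl ℂ R Q) (TTL dR dQ Ω m p q c z)
        + TMap (LinearMap.inr ℂ R Q) (exL Ω.o (LX + LY) q z) := by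
  rw [TTL, ← nXY_def dR]
  exact exL_uprod_gen dR dQ Ω hl hr m (LX + LY) (LX + LY) (LX + LY)
    (LXY_TMap _) (LXY_TMap _) (LXY_PD dR) p q c z

include hl hr in
lemma exR_uprodX (a : R) (x : Q) (p : TP R) (q : TP Q) :
    exR (uprod dR dQ Ω m) LX (a, x)
        (TMap (LinearMap.inl ℂ R Q) p + TMap (LinearMap.inr ℂ R Q) q)
      = TMap (LinearMap.inl ℂ R Q) (TTRx dR dQ Ω m a x p q)
        + TMap (LinearMap.inr ℂ R Q) (exR Ω.o LX x q) := by
  rw [TTRx, ← nX_def dR]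
  exact exR_uprod_gen dR dQ Ω hl hr m LX LX LX (LX_TMap _) (LX_TMap _) (LX_PD dR) a x p q

include hl hr in
lemma exR_uprodY (a : R) (x : Q) (p : TP R) (q : TP Q) :
    exR (uprod dR dQ Ω m) LY (a, x)
        (TMap (LinearMap.inl ℂ R Q) p + TMap (LinearMap.inr ℂ R Q) q)
      = TMap (LinearMap.inl ℂ R Q) (TTRy dR dQ Ω m a x p q)
        + TMap (LinearMap.inr ℂ R Q) (exR Ω.o LY x q) := by
  rw [TTRy, ← nY_def dR]
  exact exR_uprod_gen dR dQ Ω hl hr m LY LY LY (LY_TMap _) (LY_TMap _) (LY_PD dR) a x p q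

include hl hr in
lemma lsym_component (a b c : R) (x y z : Q) :
    (exL (uprod dR dQ Ω m) (LX + LY) (ev2 (uprod dR dQ Ω m) LX (a, x) (b, y)) (c, z)
        - exR (uprod dR dQ Ω m) LX (a, x) (ev2 (uprod dR dQ Ω m) LY (b, y) (c, z))
      = exL (uprod dR dQ Ω m) (LX + LY) (ev2 (uprod dR dQ Ω m) LY (b, y) (a, x)) (c, z)
        - exR (uprod dR dQ Ω m) LY (b, y) (ev2 (uprod dR dQ Ω m) LX (a, x) (c, z)))
    ↔ ((TTL dR dQ Ω m (PPx dR dQ Ω m a b x y) (ev2 Ω.o LX x y) c z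
          - TTRx dR dQ Ω m a x (PPy dR dQ Ω m b c y z) (ev2 Ω.o LY y z)
        = TTL dR dQ Ω m (PPy dR dQ Ω m b a y x) (ev2 Ω.o LY y x) c z
          - TTRy dR dQ Ω m b y (PPx dR dQ Ω m a c x z) (ev2 Ω.o LX x z))
      ∧ (exL Ω.o (LX + LY) (ev2 Ω.o LX x y) z - exR Ω.o LX x (ev2 Ω.o LY y z)
        = exL Ω.o (LX + LY) (ev2 Ω.o LY y x) z - exR Ω.o LY y (ev2 Ω.o LX x z))) := by
  rw [ev2_uprodX dR dQ Ω m hl hr a b x y, ev2_uprodY dR dQ Ω m hl hr b c y z,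
    ev2_uprodY dR dQ Ω m hl hr b a y x, ev2_uprodX dR dQ Ω m hl hr a c x z,
    exL_uprodXY dR dQ Ω m hl hr, exL_uprodXY dR dQ Ω m hl hr,
    exR_uprodX dR dQ Ω m hl hr, exR_uprodY dR dQ Ω m hl hr]
  have key : ∀ (e1 e2 : TP R) (f1 f2 : TP Q),
      (TMap (LinearMap.inl ℂ R Q) e1 + TMap (LinearMap.inr ℂ R Q) f1)
        - (TMap (LinearMap.inl ℂ R Q) e2 + TMap (LinearMap.inr ℂ R Q) f2)
      = TMap (LinearMap.inl ℂ R Q) (e1 - e2) + TMap (LinearMap.inr ℂ R Q) (f1 - f2) := by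
    intro e1 e2 f1 f2
    simp only [map_sub]
    abel
  rw [key, key, TMap_split]

lemma rearr1 {α : Type*} [AddCommGroup α] {x1 y1 g1 g2 : α} (h1 : x1 = y1)
    (hc : g1 - g2 = x1 - y1) : g1 = g2 := by
  rw [← sub_eq_zero, hc, h1, sub_self]

lemma rearr8 {α : Type*} [AddCommGroup α]
    {x1 y1 x2 y2 x3 y3 x4 y4 x5 y5 x6 y6 x7 y7 x8 y8 g1 g2 : α}
    (h1 : x1 = y1) (h2 : x2 = y2) (h3 : x3 = y3) (h4 : x4 = y4)
    (h5 : x5 = y5) (h6 : x6 = y6) (h7 : x7 = y7) (h8 : x8 = y8)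
    (hc : g1 - g2 = (x1 - y1) + (x2 - y2) + (x3 - y3) + (x4 - y4)
      + (x5 - y5) + (x6 - y6) + (x7 - y7) + (x8 - y8)) : g1 = g2 := by
  have hz : (x1 - y1) + (x2 - y2) + (x3 - y3) + (x4 - y4)
      + (x5 - y5) + (x6 - y6) + (x7 - y7) + (x8 - y8) = 0 := by
    rw [h1, h2, h3, h4, h5, h6, h7, h8]; abel
  rw [← sub_eq_zero, hc, hz]

lemma evA1_nD_shift {W : Type*} [AddCommGroup W] [Module ℂ W] (d : W →ₗ[ℂ] W) (t : OP W) :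
    evA1 (nD d) (lsh t + pD d t) = -lsh (evA1 (nD d) t) := by
  rw [map_add, evA1_lsh, evA1_pD _ _ (nD_pD d)]
  simp only [nD, LinearMap.sub_apply, LinearMap.neg_apply]
  abel

lemma evA1_nD_negshift {W : Type*} [AddCommGroup W] [Module ℂ W] (d : W →ₗ[ℂ] W) (t : OP W) :
    evA1 (nD d) (-lsh t) = lsh (evA1 (nD d) t) + pD d (evA1 (nD d) t) := by
  rw [map_neg, evA1_lsh]
  simp only [nD, LinearMap.sub_apply, LinearMap.neg_apply]
  abel

include hl hr in
lemma uprod_conf (hmc : ConfBilin dR dR dR m) :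
    ConfBilin (dR.prodMap dQ) (dR.prodMap dQ) (dR.prodMap dQ) (uprod dR dQ Ω m) := by
  have hinl : (dR.prodMap dQ) ∘ₗ LinearMap.inl ℂ R Q = LinearMap.inl ℂ R Q ∘ₗ dR := by
    apply LinearMap.ext; intro r
    simp [LinearMap.prodMap_apply]
  have hinr : (dR.prodMap dQ) ∘ₗ LinearMap.inr ℂ R Q = LinearMap.inr ℂ R Q ∘ₗ dQ := by
    apply LinearMap.ext; intro r
    simp [LinearMap.prodMap_apply]
  constructor
  · intro e₁ e₂
    obtain ⟨a, x⟩ := e₁; obtain ⟨b, y⟩ := e₂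
    rw [show (dR.prodMap dQ) (a, x) = (dR a, dQ x) from rfl,
      uprod_val dR dQ Ω hl hr m, uprod_val dR dQ Ω hl hr m,
      hmc.dleft, Ω.hphi.dleft, Ω.hg.dleft, Ω.ho.dleft, Ω.hpsi.dright, evA1_nD_shift,
      show inlP R Q = pMap (LinearMap.inl ℂ R Q) from rfl,
      show inrP R Q = pMap (LinearMap.inr ℂ R Q) from rfl]
    simp only [map_add, map_neg, lsh_pMap]
    abel
  · intro e₁ e₂
    obtain ⟨a, x⟩ := e₁; obtain ⟨b, y⟩ := e₂
    rw [show (dR.prodMap dQ) (b, y) = (dR b, dQ y) from rfl,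
      uprod_val dR dQ Ω hl hr m, uprod_val dR dQ Ω hl hr m,
      hmc.dright, Ω.hphi.dright, Ω.hg.dright, Ω.ho.dright, Ω.hpsi.dleft, evA1_nD_negshift,
      show inlP R Q = pMap (LinearMap.inl ℂ R Q) from rfl,
      show inrP R Q = pMap (LinearMap.inr ℂ R Q) from rfl]
    simp only [map_add, lsh_pMap,
      pD_pMap dR (dR.prodMap dQ) (LinearMap.inl ℂ R Q) hinl,
      pD_pMap dQ (dR.prodMap dQ) (LinearMap.inr ℂ R Q) hinr]
    abel

end Assemble

/-- **Crossed products (Section 5.1).**  Let `Ω(R,Q) = (φ, ψ, g, ∘)` be an extending datum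
with `l` and `r` trivial.  Then `Ω(R,Q)` is a left-symmetric conformal extending structure
of `R` by `Q` if and only if `(Q, ∘_λ)` is a left-symmetric conformal algebra and the
conditions (C1)–(C5) hold. -/
theorem crossed_product_iff
    {R Q : Type*} [AddCommGroup R] [Module ℂ R] [AddCommGroup Q] [Module ℂ Q]
    (dR : R →ₗ[ℂ] R) (dQ : Q →ₗ[ℂ] Q)
    (m : R →ₗ[ℂ] R →ₗ[ℂ] OP R) (hm : IsLSCA dR m)
    (Ω : ExtDatum dR dQ) (hl : Ω.l = 0) (hr : Ω.r = 0) :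
    IsLSCA (dR.prodMap dQ) (uprod dR dQ Ω m) ↔
      (IsLSCA dQ Ω.o ∧
      -- (C1)
      (∀ (a b : R) (x : Q),
        exL m (LX + LY) (ev2 Ω.phi LX x a - ev2 Ω.psi (nY dR) x a) b
          = exR Ω.phi LX x (ev2 m LY a b) - exR m LY a (ev2 Ω.phi LX x b)) ∧
      -- (C2)
      (∀ (a b : R) (x : Q),
        exR Ω.psi (nXY dR) x (ev2 m LX a b - ev2 m LY b a)
          = exR m LX a (ev2 Ω.psi (nY dR) x b) - exR m LY b (ev2 Ω.psi (nX dR) x a)) ∧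
      -- (C3)
      (∀ (a : R) (x y : Q),
        exR Ω.psi (nXY dR) y (ev2 Ω.psi (nX dR) x a - ev2 Ω.phi LY x a)
            - exR m LX a (ev2 Ω.g LY x y)
            - exL Ω.psi (nX dR) (ev2 Ω.o LY x y) a
          = -exR Ω.phi LY x (ev2 Ω.psi (nX dR) y a)) ∧
      -- (C4)
      (∀ (a : R) (x y : Q),
        exL m (LX + LY) (ev2 Ω.g LX x y - ev2 Ω.g LY y x) a
            + exL Ω.phi (LX + LY) (ev2 Ω.o LX x y - ev2 Ω.o LY y x) a
          = exR Ω.phi LX x (ev2 Ω.phi LY y a) - exR Ω.phi LY y (ev2 Ω.phi LX x a)) ∧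
      -- (C5)
      (∀ x y z : Q,
        exR Ω.psi (nXY dR) z (ev2 Ω.g LX x y) + exL Ω.g (LX + LY) (ev2 Ω.o LX x y) z
            - exR Ω.phi LX x (ev2 Ω.g LY y z) - exR Ω.g LX x (ev2 Ω.o LY y z)
          = exR Ω.psi (nXY dR) z (ev2 Ω.g LY y x) + exL Ω.g (LX + LY) (ev2 Ω.o LY y x) z
            - exR Ω.phi LY y (ev2 Ω.g LX x z) - exR Ω.g LY y (ev2 Ω.o LX x z))) := by
  constructor
  · intro h
    have hmain := fun a b c x y z =>
      (lsym_component dR dQ Ω m hl hr a b c x y z).mp (h.lsym (a, x) (b, y) (c, z))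
    refine ⟨⟨Ω.ho, fun x y z => (hmain 0 0 0 x y z).2⟩, ?_, ?_, ?_, ?_, ?_⟩
    · intro a b x
      have h1 := (hmain 0 a b x 0 0).1
      simp only [PPx, PPy, TTL, TTRx, TTRy, ev2_zero_l, ev2_zero_r, exL_zero_p, exL_zero_v,
        exR_zero_p, exR_zero_u, add_zero, zero_add, sub_zero, zero_sub] at h1
      simp only [exL_sub_p]
      exact rearr1 h1 (by abel)
    · intro a b x
      have h1 := (hmain a b 0 0 0 x).1
      simp only [PPx, PPy, TTL, TTRx, TTRy, ev2_zero_l, ev2_zero_r, exL_zero_p, exL_zero_v,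
        exR_zero_p, exR_zero_u, add_zero, zero_add, sub_zero, zero_sub] at h1
      simp only [exR_sub_p]
      exact rearr1 h1 (by abel)
    · intro a x y
      have h1 := (hmain a 0 0 0 x y).1
      simp only [PPx, PPy, TTL, TTRx, TTRy, ev2_zero_l, ev2_zero_r, exL_zero_p, exL_zero_v,
        exR_zero_p, exR_zero_u, add_zero, zero_add, sub_zero, zero_sub] at h1
      simp only [exR_sub_p]
      exact rearr1 h1 (by abel)
    · intro a x y
      have h1 := (hmain 0 0 a x y 0).1
      simp only [PPx, PPy, TTL, TTRx, TTRy, ev2_zero_l, ev2_zero_r, exL_zero_p, exL_zero_v,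
        exR_zero_p, exR_zero_u, add_zero, zero_add, sub_zero, zero_sub] at h1
      simp only [exL_sub_p]
      exact rearr1 h1 (by abel)
    · intro x y z
      have h1 := (hmain 0 0 0 x y z).1
      simp only [PPx, PPy, TTL, TTRx, TTRy, ev2_zero_l, ev2_zero_r, exL_zero_p, exL_zero_v,
        exR_zero_p, exR_zero_u, add_zero, zero_add, sub_zero, zero_sub] at h1
      exact rearr1 h1 (by abel)
  · rintro ⟨hQ, hC1, hC2, hC3, hC4, hC5⟩
    refine ⟨uprod_conf dR dQ Ω m hl hr hm.conf, ?_⟩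
    intro e₁ e₂ e₃
    obtain ⟨a, x⟩ := e₁; obtain ⟨b, y⟩ := e₂; obtain ⟨c, z⟩ := e₃
    refine (lsym_component dR dQ Ω m hl hr a b c x y z).mpr ⟨?_, hQ.lsym x y z⟩
    have E1 := hm.lsym a b c
    have E2 := hC1 b c x
    rw [exL_sub_p] at E2
    have t1 := hC1 a c y
    rw [exL_sub_p] at t1
    have E3 := congrArg (sw (W := R)) t1
    simp only [map_sub, map_neg,
      sw_exL m (LX + LY) (LX + LY) sw_LXY,
      sw_ev2 Ω.phi LX LY sw_LX, sw_ev2 Ω.phi LY LX sw_LY,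
      sw_ev2 Ω.psi (nY dR) (nX dR) (sw_nY dR),
      sw_exR Ω.phi LX LY sw_LX,
      sw_ev2 m LY LX sw_LY, sw_ev2 m LX LY sw_LX,
      sw_exR m LY LX sw_LY] at E3
    have E4 := hC2 a b z
    rw [exR_sub_p] at E4
    have E5 := hC3 a y z
    rw [exR_sub_p] at E5
    have t2 := hC3 b x z
    rw [exR_sub_p] at t2
    have E6 := congrArg (sw (W := R)) t2
    simp only [map_sub, map_neg,
      sw_exR Ω.psi (nXY dR) (nXY dR) (sw_nXY dR),
      sw_ev2 Ω.psi (nX dR) (nY dR) (sw_nX dR),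
      sw_ev2 Ω.phi LY LX sw_LY,
      sw_exR m LX LY sw_LX,
      sw_ev2 Ω.g LY LX sw_LY,
      sw_exL Ω.psi (nX dR) (nY dR) (sw_nX dR),
      sw_ev2 Ω.o LY LX sw_LY,
      sw_exR Ω.phi LY LX sw_LY] at E6
    have E7 := hC4 c x y
    rw [exL_sub_p, exL_sub_p] at E7
    have E8 := hC5 x y z
    simp only [PPx, PPy, TTL, TTRx, TTRy, exL_add_p, exR_add_p]
    exact rearr8 E1 E2 E3.symm E4 E5 E6.symm E7 E8 (by abel)
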